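/- arXiv:quant-ph/0511272 — 6 statements merged into one kernel-verified Lean document; each statement's English description precedes it below -/
import Mathlib

section
/- Let n be a natural number and f : (Fin n → ZMod 2) → ZMod 2 a Boolean function. If the phase vector of f is a product state, i.e., there exist h : Fin n → ZMod 2 → ℂ with (-1 : ℂ)^((f x).val) = ∏ i, h i (x i) for all x, then there exist c : ZMod 2 and a : Fin n → ZMod 2 such that f(x) = (∑ i, a i * x i) + c for all x. (Any non-entangling function for the Deutsch–Jozsa algorithm equals f_{c,a} for some c and a.) -/
/-!
A vector ψ x = ∏ᵢ hᵢ(xᵢ) that does not vanish at a base point b is determined by its values at the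
points b[i ↦ v] that differ from b in one coordinate: ψ x / ψ b = ∏ᵢ ψ(b[i ↦ xᵢ]) / ψ b.
For the phase vector of f, χ(u) = (-1)^u is an injective additive character of ZMod 2, so with b = 0
this says f x - f 0 = ∑ᵢ (f(eᵢ xᵢ) - f 0); and a function of one bit is affine, so
f(eᵢ xᵢ) - f 0 = (f eᵢ - f 0) xᵢ.
-/

open Finset Function

lemma AddChar.map_sum_eq_prod {A M ι : Type*} [AddCommMonoid A] [CommMonoid M] (ψ : AddChar A M)
    (s : Finset ι) (f : ι → A) : ψ (∑ i ∈ s, f i) = ∏ i ∈ s, ψ (f i) := by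
  induction s using Finset.cons_induction with
  | empty => simp
  | cons i s hi ih => rw [sum_cons, prod_cons, map_add_eq_mul, ih]

namespace ZMod

lemma eq_zero_or_eq_one (u : ZMod 2) : u = 0 ∨ u = 1 := by decide +revert

def signChar (R : Type*) [CommRing R] : AddChar (ZMod 2) R where
  toFun u := (-1) ^ u.val
  map_zero_eq_one' := by simp
  map_add_eq_mul' u v := by
    rw [val_add, ← pow_add, ← Nat.mod_add_div (u.val + v.val) 2, pow_add, pow_mul]; simp

variable {R : Type*} [CommRing R]

lemma signChar_apply (u : ZMod 2) : signChar R u = (-1) ^ u.val := rfl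

lemma signChar_injective (hR : (-1 : R) ≠ 1) : Injective (signChar R) := by
  intro u v huv
  rcases eq_zero_or_eq_one u with rfl | rfl <;> rcases eq_zero_or_eq_one v with rfl | rfl <;>
    simp only [signChar_apply, val_zero, val_one, pow_zero, pow_one] at huv
  all_goals first | rfl | exact absurd huv hR | exact absurd huv.symm hR

lemma apply_sub_apply_zero (g : ZMod 2 → ZMod 2) (v : ZMod 2) : g v - g 0 = (g 1 - g 0) * v := by
  rcases eq_zero_or_eq_one v with rfl | rfl <;> simp

end ZMod

section ProductState

variable {K ι α : Type*} [Field K] [Fintype ι] [DecidableEq ι]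

lemma prod_update_div_prod (h : ι → α → K) {b : ι → α} (hb : ∏ j, h j (b j) ≠ 0) (i : ι) (v : α) :
    (∏ j, h j (update b i v j)) / ∏ j, h j (b j) = h i v / h i (b i) := by
  rw [prod_eq_mul_prod_sdiff_singleton_of_mem (mem_univ i) (fun j => h j (b j))] at hb ⊢
  simp only [apply_update (fun j => h j), prod_update_of_mem (mem_univ i)]
  exact mul_div_mul_right _ _ (right_ne_zero_of_mul hb)

lemma prod_eq_mul_prod_update_div (h : ι → α → K) {b : ι → α} (hb : ∏ j, h j (b j) ≠ 0)
    (x : ι → α) :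
    ∏ i, h i (x i) =
      (∏ j, h j (b j)) * ∏ i, (∏ j, h j (update b i (x i) j)) / ∏ j, h j (b j) := by
  simp only [prod_update_div_prod h hb, prod_div_distrib]
  rw [mul_div_cancel₀ _ hb]

end ProductState

/-- If the phase vector of a Boolean function `f` is a product state, then
`f = f_{c,a}` for some `c : ZMod 2` and `a : Fin n → ZMod 2`. -/
theorem nonentangling_implies_fca (n : ℕ) (f : (Fin n → ZMod 2) → ZMod 2)
    (h : Fin n → ZMod 2 → ℂ)
    (hprod : ∀ x : Fin n → ZMod 2, (-1 : ℂ) ^ ((f x).val) = ∏ i, h i (x i)) :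
    ∃ (c : ZMod 2) (a : Fin n → ZMod 2),
      ∀ x : Fin n → ZMod 2, f x = (∑ i, a i * x i) + c := by
  let χ := ZMod.signChar ℂ
  have hψ : ∀ x, ∏ i, h i (x i) = χ (f x) := fun x => (hprod x).symm
  have h0 : ∏ i, h i ((0 : Fin n → ZMod 2) i) ≠ 0 := by
    rw [hψ]; exact pow_ne_zero _ (by norm_num)
  refine ⟨f 0, fun i => f (update 0 i 1) - f 0, fun x =>
    ZMod.signChar_injective (R := ℂ) (by norm_num) ?_⟩
  have hcoord : ∀ i, f (update 0 i (x i)) - f 0 = (f (update 0 i 1) - f 0) * x i := fun i => by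
    simpa using ZMod.apply_sub_apply_zero (fun v => f (update 0 i v)) (x i)
  calc χ (f x) = ∏ i, h i (x i) := (hψ x).symm
    _ = χ (f 0) * ∏ i, χ (f (update 0 i (x i))) / χ (f 0) := by
      rw [prod_eq_mul_prod_update_div h h0]; simp only [hψ]
    _ = χ ((∑ i, (f (update 0 i 1) - f 0) * x i) + f 0) := by
      simp only [← AddChar.map_sub_eq_div, hcoord, ← AddChar.map_sum_eq_prod,
        ← AddChar.map_add_eq_mul, add_comm]
end

section
/- Let n be a natural number and S a finite set of n-bit strings (Fin n → ZMod 2) with |S| < n. Then there exists a nonzero a : Fin n → ZMod 2 such that ∑ i, a i * x i = 0 for all x ∈ S; consequently the balanced function f_{0,a} and the constant function f_{0,0} agree on every element of S, so fewer than n oracle queries cannot distinguish a constant function from a balanced function within F_DJ^⊗. (Lower-bound half of: the classical query complexity of DJ^⊗ is Θ(n).) -/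
/-- If `S` is a set of fewer than `n` strings, there is a nonzero `a` whose inner
product with every element of `S` vanishes; hence the balanced function `f_{0,a}`
agrees with the constant function `f_{0,0}` on all of `S`, so fewer than `n`
classical queries cannot distinguish constant from balanced within `F_DJ^⊗`. -/
theorem dj_otimes_classical_lower_bound (n : ℕ) (S : Finset (Fin n → ZMod 2))
    (hS : S.card < n) :
    ∃ a : Fin n → ZMod 2, a ≠ 0 ∧
      (∀ x ∈ S, (∑ i, a i * x i) = 0) ∧
      (∀ x ∈ S, (∑ i, a i * x i) + (0 : ZMod 2) = (∑ i, (0 : ZMod 2) * x i) + 0) := by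
  let φ : (Fin n → ZMod 2) →ₗ[ZMod 2] (S → ZMod 2) :=
    { toFun := fun a x => ∑ i, a i * (x : Fin n → ZMod 2) i
      map_add' := by
        intro a b; funext x; simp [add_mul, Finset.sum_add_distrib]
      map_smul' := by
        intro c a; funext x; simp [Finset.mul_sum, mul_assoc] }
  have : ¬ Function.Injective φ := by
    intro hinj
    have h1 : Module.finrank (ZMod 2) (Fin n → ZMod 2) ≤
        Module.finrank (ZMod 2) (S → ZMod 2) :=
      LinearMap.finrank_le_finrank_of_injective hinj
    simp [Module.finrank_pi] at h1
    omega
  rw [injective_iff_map_eq_zero] at this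
  push_neg at this
  obtain ⟨a, ha0, ha⟩ := this
  refine ⟨a, ha, ?_, ?_⟩
  · intro x hx
    have := congrFun ha0 ⟨x, hx⟩
    simpa [φ] using this
  · intro x hx
    have := congrFun ha0 ⟨x, hx⟩
    simp [φ] at this
    simp [this]
end

section
/- Let n be a natural number and f : (Fin n → ZMod 2) → ZMod 2 a Boolean function whose quantum phase-oracle is separability-conserving in the following sense: for every h : Fin n → ZMod 2 → ℂ, the function x ↦ (-1 : ℂ)^((f x).val) * ∏ i, h i (x i) is again a product state. Then there exist c : ZMod 2 and a : Fin n → ZMod 2 such that f(x) = (∑ i, a i * x i) + c for all x, i.e., f ∈ F_DJ^⊗. -/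
open Finset

private lemma negOnePow_cast_eq {a b : ℕ} (h : (-1:ℂ)^a = (-1:ℂ)^b) :
    (a : ZMod 2) = (b : ZMod 2) := by
  have hmod : a % 2 = b % 2 := by
    rcases Nat.even_or_odd a with ha | ha <;> rcases Nat.even_or_odd b with hb | hb
    · rw [Nat.even_iff.mp ha, Nat.even_iff.mp hb]
    · rw [ha.neg_one_pow, hb.neg_one_pow] at h; norm_num at h
    · rw [ha.neg_one_pow, hb.neg_one_pow] at h; norm_num at h
    · rw [Nat.odd_iff.mp ha, Nat.odd_iff.mp hb]
  calc (a : ZMod 2) = ((a % 2 : ℕ) : ZMod 2) := (ZMod.natCast_mod a 2).symm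
    _ = ((b % 2 : ℕ) : ZMod 2) := by rw [hmod]
    _ = b := ZMod.natCast_mod b 2

/-- If the quantum phase-oracle of `f` is separability-conserving (it maps every
product state to a product state), then `f ∈ F_DJ^⊗`, i.e. `f = f_{c,a}` for some
`c` and `a`. -/
theorem separability_conserving_oracle_implies_fca (n : ℕ)
    (f : (Fin n → ZMod 2) → ZMod 2)
    (hsep : ∀ h : Fin n → ZMod 2 → ℂ, ∃ h' : Fin n → ZMod 2 → ℂ,
      ∀ x : Fin n → ZMod 2,
        (-1 : ℂ) ^ ((f x).val) * ∏ i, h i (x i) = ∏ i, h' i (x i)) :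
    ∃ (c : ZMod 2) (a : Fin n → ZMod 2),
      ∀ x : Fin n → ZMod 2, f x = (∑ i, a i * x i) + c := by
  obtain ⟨h', hh⟩ := hsep (fun _ _ => 1)
  simp only [Finset.prod_const_one, mul_one] at hh
  have hv : ∀ v : ZMod 2, ((v.val : ℕ) : ZMod 2) = v := by decide
  have h01 : ∀ w : ZMod 2, w = 0 ∨ w = 1 := by decide
  have char2 : ∀ u w : ZMod 2, (u + w) * 1 + w = u := by decide
  -- key complex identity
  have key : ∀ x : Fin n → ZMod 2,
      (-1:ℂ)^((f x).val) * ((-1:ℂ)^((f 0).val))^(n-1)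
        = ∏ i, (-1:ℂ)^((f (Pi.single i (x i))).val) := by
    intro x
    have e1 : ∀ i : Fin n, (-1:ℂ)^((f (Pi.single i (x i))).val)
        = h' i (x i) * ∏ j ∈ {i}ᶜ, h' j 0 := by
      intro i
      rw [hh]
      rw [Fintype.prod_eq_mul_prod_compl i]
      congr 1
      · rw [Pi.single_eq_same]
      · refine Finset.prod_congr rfl fun j hj => ?_
        rw [Pi.single_eq_of_ne (Finset.notMem_singleton.mp (Finset.mem_compl.mp hj))]
    calc (-1:ℂ)^((f x).val) * ((-1:ℂ)^((f 0).val))^(n-1)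
        = (∏ i, h' i (x i)) * (∏ i, h' i 0)^(n-1) := by rw [hh x, hh 0]; rfl
      _ = (∏ i, h' i (x i)) * ∏ i, ∏ j ∈ ({i}ᶜ : Finset (Fin n)), h' j 0 := by
          congr 1
          have : (∏ i, ∏ j ∈ ({i}ᶜ : Finset (Fin n)), h' j 0)
              = ∏ j, ∏ i ∈ ({j}ᶜ : Finset (Fin n)), h' j 0 := by
            refine Finset.prod_comm' ?_
            intro i j
            simp [Finset.mem_compl, ne_comm]
          rw [this]
          simp only [Finset.prod_const]
          rw [← Finset.prod_pow]
          congr 1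
          ext j
          rw [Finset.card_compl, Finset.card_singleton, Fintype.card_fin]
      _ = ∏ i, (h' i (x i) * ∏ j ∈ ({i}ᶜ : Finset (Fin n)), h' j 0) := by
          rw [Finset.prod_mul_distrib]
      _ = ∏ i, (-1:ℂ)^((f (Pi.single i (x i))).val) := by
          exact (Finset.prod_congr rfl fun i _ => (e1 i).symm)
  -- ZMod 2 identity
  have key2 : ∀ x : Fin n → ZMod 2,
      f x + ((n-1 : ℕ) : ZMod 2) * f 0 = ∑ i, f (Pi.single i (x i)) := by
    intro x
    have hc := key x
    rw [← pow_mul, ← pow_add, Finset.prod_pow_eq_pow_sum] at hc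
    have := negOnePow_cast_eq hc
    push_cast at this
    simpa [hv, mul_comm] using this
  -- evaluate single points
  have hsingle : ∀ (i : Fin n) (v : ZMod 2),
      f (Pi.single i v) = (f (Pi.single i 1) + f 0) * v + f 0 := by
    intro i v
    rcases h01 v with rfl | rfl
    · simp [Pi.single_zero]
    · rw [char2]
  rcases Nat.eq_zero_or_pos n with rfl | hn
  · refine ⟨0, fun _ => 0, fun x => ?_⟩
    have := key2 x
    simp at this
    simp [this]
  · refine ⟨f 0, fun i => f (Pi.single i 1) + f 0, fun x => ?_⟩
    have h2 : (2 : ZMod 2) = 0 := by decide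
    have hk := key2 x
    have hS : (∑ i, f (Pi.single i (x i)))
        = (∑ i, (f (Pi.single i 1) + f 0) * x i) + (n : ZMod 2) * f 0 := by
      rw [Finset.sum_congr rfl fun i _ => hsingle i (x i), Finset.sum_add_distrib]
      simp [Finset.card_univ, mul_comm]
    rw [hS] at hk
    have hcast : ((n : ZMod 2) + ((n-1 : ℕ) : ZMod 2)) = 1 := by
      have hn1 : n + (n - 1) = 2 * (n - 1) + 1 := by omega
      have hthis : ((n + (n-1) : ℕ) : ZMod 2) = ((2*(n-1)+1 : ℕ) : ZMod 2) := by rw [hn1]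
      push_cast at hthis
      linear_combination hthis + ((n-1 : ℕ) : ZMod 2) * h2
    linear_combination hk - f 0 * hcast + (f 0 * ((n : ZMod 2) - 1)) * h2
end

section
/- Let n be a natural number and f : (Fin n → ZMod 2) → (Fin n → ZMod 2). If the state (1/√(2^n)) ∑_x |x⟩|f(x)⟩ produced by Simon's algorithm is separable across the first n and last n qubits — i.e., there exist γ, δ : (Fin n → ZMod 2) → ℂ such that for all x, y : Fin n → ZMod 2, (if y = f x then (1 : ℂ) else 0) = γ x * δ y — then f is a constant function. (Hence any non-trivial instance of Simon's problem generates entanglement in Simon's algorithm.) -/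
/-- If the state `∑_x |x⟩|f(x)⟩` produced by Simon's algorithm is separable across
the first `n` and the last `n` qubits, then `f` is constant: any non-trivial
instance of Simon's problem generates entanglement. -/
theorem simon_separable_implies_constant (n : ℕ)
    (f : (Fin n → ZMod 2) → (Fin n → ZMod 2))
    (γ δ : (Fin n → ZMod 2) → ℂ)
    (hsep : ∀ x y : Fin n → ZMod 2,
      (if y = f x then (1 : ℂ) else 0) = γ x * δ y) :
    ∀ x y : Fin n → ZMod 2, f x = f y := by
  intro x y
  by_contra h
  have h1 : (1 : ℂ) = γ x * δ (f x) := by simpa using hsep x (f x)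
  have h2 : (1 : ℂ) = γ y * δ (f y) := by simpa using hsep y (f y)
  have h0 : (0 : ℂ) = γ x * δ (f y) := by
    have := hsep x (f y)
    simpa [Ne.symm h] using this
  have hγ : γ x ≠ 0 := fun hz => by simp [hz] at h1
  have hδ : δ (f y) = 0 := by
    rcases mul_eq_zero.mp h0.symm with h' | h'
    · exact absurd h' hγ
    · exact h'
  simp [hδ] at h2
end

section
/- Let n be a natural number and f : (Fin n → ZMod 2) → ZMod 2. If the phase vector of f is a product state (there exist h : Fin n → ZMod 2 → ℂ with (-1 : ℂ)^((f x).val) = ∏ i, h i (x i) for all x), then the number of marked elements |{x : f x = 1}| is 0, 2^(n-1), or 2^n. Hence any instance of Grover's search problem in which the number of marked elements is not 0, half, or all of the 2^n elements generates entanglement after the first oracle call of Grover's algorithm. -/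
/-- If the phase vector of `f` is a product state, then the number of marked
elements is `0`, `2^(n-1)` or `2^n`: any Grover instance with a different number
of marked elements generates entanglement after the first oracle call. -/
theorem grover_nonentangling_marked_count (n : ℕ)
    (f : (Fin n → ZMod 2) → ZMod 2) (h : Fin n → ZMod 2 → ℂ)
    (hprod : ∀ x : Fin n → ZMod 2, (-1 : ℂ) ^ ((f x).val) = ∏ i, h i (x i)) :
    (Finset.univ.filter (fun x : Fin n → ZMod 2 => f x = 1)).card = 0 ∨
    (Finset.univ.filter (fun x : Fin n → ZMod 2 => f x = 1)).card = 2 ^ (n - 1) ∨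
    (Finset.univ.filter (fun x : Fin n → ZMod 2 => f x = 1)).card = 2 ^ n := by
  classical
  set M := (Finset.univ.filter (fun x : Fin n → ZMod 2 => f x = 1)).card with hM
  have hcardU : (Finset.univ : Finset (Fin n → ZMod 2)).card = 2 ^ n := by
    simp [Finset.card_univ]
  have hMle : M ≤ 2 ^ n := by
    rw [hM, ← hcardU]; exact Finset.card_filter_le _ _
  -- first evaluation of the sum, by counting
  have hS : ∑ x : Fin n → ZMod 2, (-1 : ℂ) ^ ((f x).val)
      = (2 ^ n : ℂ) - 2 * M := by
    have hsplit := Finset.sum_filter_add_sum_filter_not (Finset.univ : Finset (Fin n → ZMod 2))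
      (fun x => f x = 1) (fun x => (-1 : ℂ) ^ ((f x).val))
    have hval1 : ∀ x ∈ Finset.univ.filter (fun x : Fin n → ZMod 2 => f x = 1),
        (-1 : ℂ) ^ ((f x).val) = -1 := by
      intro x hx
      have hfx : f x = 1 := (Finset.mem_filter.mp hx).2
      rw [hfx]
      simp [ZMod.val_one]
    have h1 : ∑ x ∈ Finset.univ.filter (fun x : Fin n → ZMod 2 => f x = 1),
        (-1 : ℂ) ^ ((f x).val) = -(M : ℂ) := by
      rw [Finset.sum_congr rfl hval1, Finset.sum_const, hM]
      simp
    have hcards : (Finset.univ.filter (fun x : Fin n → ZMod 2 => ¬ f x = 1)).card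
        = 2 ^ n - M := by
      have := Finset.card_filter_add_card_filter_not
        (s := (Finset.univ : Finset (Fin n → ZMod 2))) (p := fun x => f x = 1)
      rw [hcardU] at this
      omega
    have hval0 : ∀ x ∈ Finset.univ.filter (fun x : Fin n → ZMod 2 => ¬ f x = 1),
        (-1 : ℂ) ^ ((f x).val) = 1 := by
      intro x hx
      have hne : f x ≠ 1 := (Finset.mem_filter.mp hx).2
      have hfx : f x = 0 := by
        have : ∀ a : ZMod 2, a ≠ 1 → a = 0 := by decide
        exact this _ hne
      rw [hfx]
      simp
    have h0 : ∑ x ∈ Finset.univ.filter (fun x : Fin n → ZMod 2 => ¬ f x = 1),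
        (-1 : ℂ) ^ ((f x).val) = ((2 ^ n - M : ℕ) : ℂ) := by
      rw [Finset.sum_congr rfl hval0, Finset.sum_const, hcards]
      simp
    rw [← hsplit, h1, h0, Nat.cast_sub hMle]
    push_cast
    ring
  -- second evaluation of the sum, as a product
  have huniv : (Finset.univ : Finset (ZMod 2)) = {0, 1} := by decide
  have hS2 : ∑ x : Fin n → ZMod 2, (-1 : ℂ) ^ ((f x).val)
      = ∏ i, (h i 0 + h i 1) := by
    calc ∑ x : Fin n → ZMod 2, (-1 : ℂ) ^ ((f x).val)
        = ∑ x : Fin n → ZMod 2, ∏ i, h i (x i) :=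
          Finset.sum_congr rfl (fun x _ => hprod x)
      _ = ∑ x ∈ Fintype.piFinset (fun _ : Fin n => (Finset.univ : Finset (ZMod 2))),
            ∏ i, h i (x i) := by rw [Fintype.piFinset_univ]
      _ = ∏ i, ∑ b : ZMod 2, h i b := (Finset.prod_univ_sum _ _).symm
      _ = ∏ i, (h i 0 + h i 1) := Finset.prod_congr rfl (fun i _ => by
          rw [huniv, Finset.sum_insert (by decide), Finset.sum_singleton])
  -- self-products of the phase are 1
  have hsq : ∀ v : ℕ, (-1 : ℂ) ^ v * (-1 : ℂ) ^ v = 1 := by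
    intro v
    rw [← pow_add]
    exact Even.neg_one_pow ⟨v, rfl⟩
  by_cases hz : ∃ i, h i 0 + h i 1 = 0
  · obtain ⟨i, hi⟩ := hz
    have hzero : (2 ^ n : ℂ) - 2 * M = 0 := by
      rw [← hS, hS2]
      exact Finset.prod_eq_zero (Finset.mem_univ i) hi
    have h2 : 2 * M = 2 ^ n := by
      have : (2 ^ n : ℂ) = 2 * M := sub_eq_zero.mp hzero
      exact_mod_cast this.symm
    have hn : n ≠ 0 := by rintro rfl; exact i.elim0
    right; left
    obtain ⟨m, rfl⟩ := Nat.exists_eq_succ_of_ne_zero hn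
    have : 2 ^ (m + 1) = 2 ^ m * 2 := pow_succ 2 m
    simp only [Nat.succ_sub_one]
    omega
  · push_neg at hz
    have heq : ∀ i, h i 1 = h i 0 := by
      intro i
      set x0 : Fin n → ZMod 2 := fun _ => 0 with hx0
      set x1 : Fin n → ZMod 2 := Function.update x0 i 1 with hx1
      set R : ℂ := ∏ j ∈ Finset.univ.erase i, h j 0 with hR
      have hP : (-1 : ℂ) ^ ((f x0).val) = h i 0 * R := by
        rw [hprod x0, ← Finset.mul_prod_erase Finset.univ _ (Finset.mem_univ i)]
      have hQ : (-1 : ℂ) ^ ((f x1).val) = h i 1 * R := by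
        rw [hprod x1, ← Finset.mul_prod_erase Finset.univ _ (Finset.mem_univ i)]
        congr 1
        · rw [hx1, Function.update_self]
        · refine Finset.prod_congr rfl fun j hj => ?_
          rw [hx1, Function.update_of_ne (Finset.ne_of_mem_erase hj)]
      set P : ℂ := (-1 : ℂ) ^ ((f x0).val) with hPdef
      set Q : ℂ := (-1 : ℂ) ^ ((f x1).val) with hQdef
      have hPP : P * P = 1 := hsq _
      have hQQ : Q * Q = 1 := hsq _
      have key : h i 1 = (P * Q) * h i 0 := by
        have e1 : Q * (h i 0) = P * (h i 1) := by
          rw [hP, hQ]; ring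
        calc h i 1 = (P * P) * h i 1 := by rw [hPP]; ring
          _ = P * (P * h i 1) := by ring
          _ = P * (Q * h i 0) := by rw [e1]
          _ = (P * Q) * h i 0 := by ring
      have hPQ : P * Q = 1 ∨ P * Q = -1 := by
        apply mul_self_eq_one_iff.mp
        calc (P * Q) * (P * Q) = (P * P) * (Q * Q) := by ring
          _ = 1 := by rw [hPP, hQQ]; ring
      rcases hPQ with hpq | hpq
      · rw [key, hpq, one_mul]
      · exfalso
        apply hz i
        rw [key, hpq]
        ring
    have hz0 : ∀ i, h i 0 ≠ 0 := by
      intro i hi0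
      apply hz i
      rw [heq i, hi0]
      ring
    have hb : ∀ i (b : ZMod 2), h i b = h i 0 := by
      intro i b
      have : ∀ b : ZMod 2, b = 0 ∨ b = 1 := by decide
      rcases this b with rfl | rfl
      · rfl
      · exact heq i
    have hPne : (∏ i, h i 0) ≠ 0 :=
      Finset.prod_ne_zero_iff.mpr (fun i _ => hz0 i)
    have hconst : ∀ x, f x = f (fun _ => 0) := by
      intro x
      have e : (-1 : ℂ) ^ ((f x).val) = (-1 : ℂ) ^ ((f (fun _ => 0)).val) := by
        rw [hprod x, hprod (fun _ => 0)]
        exact Finset.prod_congr rfl fun i _ => hb i (x i)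
      by_contra hne
      have hvne : (f x).val ≠ (f (fun _ => 0)).val := by
        intro hh
        apply hne
        have : ∀ a b : ZMod 2, a.val = b.val → a = b := by decide
        exact this _ _ hh
      have hvx : (f x).val < 2 := (f x).val_lt
      have hv0 : (f (fun _ => 0)).val < 2 := (f (fun _ => 0)).val_lt
      interval_cases hx1 : (f x).val <;> interval_cases hx2 : (f (fun _ => 0)).val <;>
        first
        | exact hvne rfl
        | norm_num at e
    by_cases hf : f (fun _ => 0) = 1
    · right; right
      rw [hM, ← hcardU]
      congr 1
      rw [Finset.filter_true_of_mem]
      intro x _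
      rw [hconst x, hf]
    · left
      rw [hM, Finset.card_eq_zero, Finset.filter_eq_empty_iff]
      intro x _
      rw [hconst x]
      exact hf
end

section
/- Let n ≥ 1 and let S be a finite set of n-bit strings with |S| ≤ 2^(n-1). Then there exists a balanced function g : (Fin n → ZMod 2) → ZMod 2 (taking the value 1 on exactly 2^(n-1) inputs) such that g x = 0 for all x ∈ S; since the constant-zero function also vanishes on S, no deterministic classical algorithm making at most 2^(n-1) oracle queries can distinguish a constant function from a balanced one, so 2^(n-1) + 1 queries are necessary for the exact classical solution of the Deutsch–Jozsa problem. -/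
/-! Pick any `2^(n-1)` strings outside `S` (there is room, since `|S| ≤ 2^(n-1)` leaves at least
`2^n - 2^(n-1) = 2^(n-1)` strings) and let `g` be the indicator function of that set. -/

open Finset

theorem exists_card_filter_eq_one_and_eq_zero_on {α M : Type*} [Fintype α] [DecidableEq α]
    [Zero M] [One M] [NeZero (1 : M)] [DecidableEq M] (S : Finset α) {k : ℕ}
    (hk : #S + k ≤ Fintype.card α) :
    ∃ g : α → M, #{x | g x = 1} = k ∧ ∀ x ∈ S, g x = 0 := by
  have hroom : k ≤ #Sᶜ := by rw [card_compl]; omega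
  obtain ⟨T, hTS, rfl⟩ := exists_subset_card_eq hroom
  refine ⟨fun x => if x ∈ T then 1 else 0, ?_, fun x hx => ?_⟩
  · congr 1
    ext x
    by_cases hx : x ∈ T <;> simp [hx]
  · have hxT : x ∉ T := fun hxT => mem_compl.mp (hTS hxT) hx
    simp [hxT]

theorem card_fun_zmod_two_eq_two_pow_pred_add (n : ℕ) (hn : 1 ≤ n) :
    Fintype.card (Fin n → ZMod 2) = 2 ^ (n - 1) + 2 ^ (n - 1) := by
  rw [Fintype.card_fun, ZMod.card, Fintype.card_fin, ← two_mul, ← pow_succ', Nat.sub_add_cancel hn]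

/-- For `n ≥ 1` and a set `S` of at most `2^(n-1)` strings, there is a balanced
function vanishing on all of `S`; hence `2^(n-1)` classical queries cannot
distinguish a constant function from a balanced one, and `2^(n-1) + 1` queries
are necessary for the exact classical Deutsch–Jozsa problem. -/
theorem dj_classical_lower_bound (n : ℕ) (hn : 1 ≤ n)
    (S : Finset (Fin n → ZMod 2)) (hS : S.card ≤ 2 ^ (n - 1)) :
    ∃ g : (Fin n → ZMod 2) → ZMod 2,
      (Finset.univ.filter (fun x : Fin n → ZMod 2 => g x = 1)).card = 2 ^ (n - 1) ∧
      ∀ x ∈ S, g x = 0 :=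
  exists_card_filter_eq_one_and_eq_zero_on S <| by
    rw [card_fun_zmod_two_eq_two_pow_pred_add n hn]
    omega
end
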